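/- (q-Lucas congruence) Let d ≥ 2 be an integer and let x_1, y_1 ≥ 0 and 0 ≤ x_2, y_2 < d be integers. Then in ℤ[q], [x_1·d + x_2 choose y_1·d + y_2]_q ≡ C(x_1, y_1) · [x_2 choose y_2]_q (mod Φ_d(q)), where Φ_d is the d-th cyclotomic polynomial. -/
import Mathlib
open Finset Polynomial

noncomputable def qbinom : ℕ → ℕ → Polynomial ℤ
  | _, 0 => 1
  | 0, _ + 1 => 0
  | n + 1, k + 1 => qbinom n k + X ^ (k + 1) * qbinom n (k + 1)

lemma qbinom_zero_right (n : ℕ) : qbinom n 0 = 1 := by cases n <;> rfl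

lemma qbinom_succ_succ (n k : ℕ) :
    qbinom (n + 1) (k + 1) = qbinom n k + X ^ (k + 1) * qbinom n (k + 1) := rfl

lemma qbinom_eq_zero : ∀ {n k : ℕ}, n < k → qbinom n k = 0
  | 0, _ + 1, _ => rfl
  | n + 1, k + 1, h => by
    rw [qbinom_succ_succ, qbinom_eq_zero (by omega), qbinom_eq_zero (by omega),
      mul_zero, add_zero]

lemma qbinom_self : ∀ n : ℕ, qbinom n n = 1
  | 0 => rfl
  | n + 1 => by
    rw [qbinom_succ_succ, qbinom_self n, qbinom_eq_zero (by omega), mul_zero, add_zero]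

lemma qbinom_one : ∀ n : ℕ, qbinom (n + 1) 1 = qbinom n 1 + X ^ n
  | 0 => by simp [qbinom_succ_succ, qbinom_zero_right, qbinom_eq_zero]
  | n + 1 => by
    have h1 : qbinom (n + 2) 1 = qbinom (n + 1) 0 + X ^ 1 * qbinom (n + 1) 1 :=
      qbinom_succ_succ (n + 1) 0
    have h2 : qbinom (n + 1) 1 = qbinom n 0 + X ^ 1 * qbinom n 1 := qbinom_succ_succ n 0
    conv_lhs => rw [h1, qbinom_one n]
    conv_rhs => rw [h2]
    rw [qbinom_zero_right, qbinom_zero_right]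
    ring

lemma qbinom_pascal2 (n : ℕ) : ∀ k, k ≤ n →
    qbinom (n + 1) (k + 1) = qbinom n (k + 1) + X ^ (n - k) * qbinom n k := by
  induction n with
  | zero =>
    intro k hk
    interval_cases k
    rw [qbinom_self, qbinom_eq_zero (by omega), qbinom_self]
    simp
  | succ n ih =>
    intro k hk
    match k with
    | 0 =>
      rw [Nat.sub_zero, qbinom_zero_right, mul_one]
      exact qbinom_one (n + 1)
    | k + 1 =>
      by_cases hk' : k + 1 ≤ n
      · obtain ⟨e, he⟩ : ∃ e, n = k + 1 + e := ⟨n - (k + 1), by omega⟩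
        have hd1 : qbinom (n + 1) (k + 1) = qbinom n k + X ^ (k + 1) * qbinom n (k + 1) :=
          qbinom_succ_succ n k
        have hp1 : qbinom (n + 1) (k + 1) = qbinom n (k + 1) + X ^ (e + 1) * qbinom n k := by
          rw [ih k (by omega), show n - k = e + 1 by omega]
        have hd2 : qbinom (n + 1) (k + 2) = qbinom n (k + 1) + X ^ (k + 2) * qbinom n (k + 2) :=
          qbinom_succ_succ n (k + 1)
        have hp2 : qbinom (n + 1) (k + 2) = qbinom n (k + 2) + X ^ e * qbinom n (k + 1) := by
          rw [ih (k + 1) hk', show n - (k + 1) = e by omega]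
        have h1' : qbinom n k + X ^ (k + 1) * qbinom n (k + 1)
            = qbinom n (k + 1) + X ^ (e + 1) * qbinom n k := hd1.symm.trans hp1
        rw [show n + 1 - (k + 1) = e + 1 by omega]
        conv_lhs => rw [qbinom_succ_succ (n + 1) (k + 1), hd1, hp2]
        conv_rhs => rw [hd2, hd1]
        linear_combination (X : Polynomial ℤ) ^ 0 * h1'
      · have hkn : k = n := by omega
        subst hkn
        rw [Nat.sub_self, pow_zero, one_mul, qbinom_self,
          qbinom_eq_zero (show k + 1 < k + 2 by omega), qbinom_self, zero_add]

lemma qbinom_ratio (n k : ℕ) (h : k ≤ n) :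
    (X ^ (k + 1) - 1) * qbinom n (k + 1) = (X ^ (n - k) - 1) * qbinom n k := by
  have hd : qbinom (n + 1) (k + 1) = qbinom n k + X ^ (k + 1) * qbinom n (k + 1) :=
    qbinom_succ_succ n k
  have hp := qbinom_pascal2 n k h
  linear_combination hp - hd

lemma cyclotomic_prime (d : ℕ) (hd : 2 ≤ d) : Prime (cyclotomic d ℤ) :=
  (UniqueFactorizationMonoid.irreducible_iff_prime).mp (cyclotomic.irreducible (by omega))

lemma cyclotomic_not_dvd_X_pow_sub_one (d e : ℕ) (hd : 2 ≤ d) (he : 0 < e) (hed : e < d) :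
    ¬ cyclotomic d ℤ ∣ X ^ e - 1 := by
  intro hdvd
  rw [← prod_cyclotomic_eq_X_pow_sub_one he ℤ] at hdvd
  obtain ⟨c, hc, hdvd'⟩ := (cyclotomic_prime d hd).exists_mem_finset_dvd hdvd
  have hcd : cyclotomic d ℤ = cyclotomic c ℤ := by
    refine eq_of_monic_of_associated (cyclotomic.monic d ℤ) (cyclotomic.monic c ℤ) ?_
    exact (cyclotomic.irreducible (show 0 < d by omega)).associated_of_dvd
      (cyclotomic.irreducible (Nat.pos_of_mem_divisors hc)) hdvd'
  have : d = c := cyclotomic_injective hcd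
  have := Nat.le_of_dvd he (Nat.dvd_of_mem_divisors hc)
  omega

lemma cyclotomic_dvd_X_pow_mul (d c e : ℕ) :
    cyclotomic d ℤ ∣ X ^ (c * d + e) - X ^ e := by
  have h1 : cyclotomic d ℤ ∣ (X : Polynomial ℤ) ^ d - 1 := cyclotomic.dvd_X_pow_sub_one d ℤ
  have h2 : ((X : Polynomial ℤ) ^ d - 1) ∣ ((X ^ d) ^ c - 1 ^ c) := sub_dvd_pow_sub_pow _ _ c
  have h3 : (X : Polynomial ℤ) ^ (c * d + e) - X ^ e = X ^ e * ((X ^ d) ^ c - 1 ^ c) := by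
    rw [← pow_mul, one_pow, mul_sub, mul_one, ← pow_add]
    ring_nf
  rw [h3]
  exact (h1.trans h2).mul_left _

lemma cyclotomic_dvd_qbinom_d (d : ℕ) (hd : 2 ≤ d) :
    ∀ e, 0 < e → e < d → cyclotomic d ℤ ∣ qbinom d e := by
  intro e
  induction e with
  | zero => omega
  | succ e ih =>
    intro _ hed
    have hratio := qbinom_ratio d e (by omega)
    have hkey : cyclotomic d ℤ ∣ (X ^ (d - e) - 1) * qbinom d e := by
      rcases Nat.eq_zero_or_pos e with he0 | he0
      · subst he0
        rw [Nat.sub_zero, qbinom_zero_right, mul_one]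
        exact cyclotomic.dvd_X_pow_sub_one d ℤ
      · exact (ih he0 (by omega)).mul_left _
    rw [← hratio] at hkey
    exact ((cyclotomic_prime d hd).dvd_or_dvd hkey).resolve_left
      (cyclotomic_not_dvd_X_pow_sub_one d (e + 1) hd (by omega) hed)

lemma qlucas (d : ℕ) (hd : 2 ≤ d) : ∀ n k a b c e : ℕ, b < d → e < d →
    n = a * d + b → k = c * d + e →
    cyclotomic d ℤ ∣ qbinom n k - (a.choose c : Polynomial ℤ) * qbinom b e := by
  obtain ⟨m, rfl⟩ : ∃ m, d = m + 1 := ⟨d - 1, by omega⟩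
  intro n
  induction n with
  | zero =>
    intro k a b c e hb he hn hk
    obtain ⟨ha0, hb0⟩ : a * (m + 1) = 0 ∧ b = 0 := Nat.add_eq_zero.mp hn.symm
    have ha : a = 0 := by
      rcases Nat.mul_eq_zero.mp ha0 with h | h
      · exact h
      · omega
    subst ha; subst hb0
    rcases Nat.eq_zero_or_pos k with hk0 | hkpos
    · subst hk0
      obtain ⟨hc0, he0⟩ : c * (m + 1) = 0 ∧ e = 0 := Nat.add_eq_zero.mp hk.symm
      have hc : c = 0 := by
        rcases Nat.mul_eq_zero.mp hc0 with h | h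
        · exact h
        · omega
      subst hc; subst he0
      simp
    · rw [qbinom_eq_zero hkpos]
      rcases Nat.eq_zero_or_pos c with hc0 | hcpos
      · subst hc0
        have : e = k := by omega
        subst this
        rw [qbinom_eq_zero hkpos, mul_zero, zero_sub, neg_zero]
        exact dvd_zero _
      · obtain ⟨c', rfl⟩ : ∃ c', c = c' + 1 := ⟨c - 1, by omega⟩
        rw [Nat.choose_eq_zero_of_lt (by omega)]
        simp
  | succ n ih =>
    intro k a b c e hb he hn hk
    rcases Nat.eq_zero_or_pos k with hk0 | hkpos
    · subst hk0
      obtain ⟨hc0, he0⟩ : c * (m + 1) = 0 ∧ e = 0 := Nat.add_eq_zero.mp hk.symm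
      have hc : c = 0 := by
        rcases Nat.mul_eq_zero.mp hc0 with h | h
        · exact h
        · omega
      subst hc; subst he0
      simp [qbinom_zero_right]
    obtain ⟨k', rfl⟩ : ∃ k', k = k' + 1 := ⟨k - 1, by omega⟩
    rcases Nat.eq_zero_or_pos b with hb0 | hbpos
    · -- b = 0
      subst hb0
      obtain ⟨a'', rfl⟩ : ∃ a'', a = a'' + 1 := by
        rcases Nat.eq_zero_or_pos a with h | h
        · subst h; simp at hn
        · exact ⟨a - 1, by omega⟩
      rw [Nat.succ_mul] at hn
      have hn' : n = a'' * (m + 1) + m := by omega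
      rcases Nat.eq_zero_or_pos e with he0 | hepos
      · -- b = 0, e = 0
        subst he0
        obtain ⟨c', rfl⟩ : ∃ c', c = c' + 1 := by
          rcases Nat.eq_zero_or_pos c with h | h
          · subst h; omega
          · exact ⟨c - 1, by omega⟩
        rw [Nat.succ_mul] at hk
        have hk' : k' = c' * (m + 1) + m := by omega
        obtain ⟨u, hu⟩ := ih k' a'' m c' m (by omega) (by omega) hn' hk'
        obtain ⟨v, hv⟩ := ih (k' + 1) a'' m (c' + 1) 0 (by omega) (by omega) hn'
          (by rw [Nat.succ_mul]; omega)
        obtain ⟨w, hw⟩ := cyclotomic_dvd_X_pow_mul (m + 1) (c' + 1) 0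
        rw [qbinom_self] at hu
        rw [qbinom_zero_right] at hv
        have h1 := qbinom_succ_succ n k'
        have hpa : (((a'' + 1).choose (c' + 1) : ℕ) : Polynomial ℤ)
            = (a''.choose c' : Polynomial ℤ) + (a''.choose (c' + 1) : Polynomial ℤ) := by
          rw [Nat.choose_succ_succ]; push_cast; ring
        have h00 : qbinom 0 0 = 1 := rfl
        have hx : (X : Polynomial ℤ) ^ (k' + 1) - 1 = cyclotomic (m + 1) ℤ * w := by
          rw [hk', show c' * (m + 1) + m + 1 = (c' + 1) * (m + 1) + 0 by rw [Nat.succ_mul]; omega]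
          simpa using hw
        refine ⟨u + v + qbinom n (k' + 1) * w, ?_⟩
        rw [h1, h00, hpa]
        linear_combination hu + hv + qbinom n (k' + 1) * hx
      · -- b = 0, e > 0
        obtain ⟨e', rfl⟩ : ∃ e', e = e' + 1 := ⟨e - 1, by omega⟩
        have hk' : k' = c * (m + 1) + e' := by omega
        obtain ⟨u, hu⟩ := ih k' a'' m c e' (by omega) (by omega) hn' hk'
        obtain ⟨v, hv⟩ := ih (k' + 1) a'' m c (e' + 1) (by omega) he hn' (by omega)
        obtain ⟨w, hw⟩ := cyclotomic_dvd_X_pow_mul (m + 1) c (e' + 1)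
        obtain ⟨z, hz⟩ := cyclotomic_dvd_qbinom_d (m + 1) hd (e' + 1) (by omega) he
        have h1 := qbinom_succ_succ n k'
        have h2 := qbinom_succ_succ m e'
        have h0 : qbinom 0 (e' + 1) = 0 := qbinom_eq_zero (by omega)
        have hx : (X : Polynomial ℤ) ^ (k' + 1) - X ^ (e' + 1)
            = cyclotomic (m + 1) ℤ * w := by
          rw [hk', show c * (m + 1) + e' + 1 = c * (m + 1) + (e' + 1) by omega]
          exact hw
        refine ⟨u + X ^ (e' + 1) * v + qbinom n (k' + 1) * w
          + (a''.choose c : Polynomial ℤ) * z, ?_⟩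
        rw [h1, h0, mul_zero, sub_zero]
        linear_combination hu + X ^ (e' + 1) * hv + qbinom n (k' + 1) * hx
          + (a''.choose c : Polynomial ℤ) * (h2.symm.trans hz)
    · -- b > 0
      obtain ⟨b', rfl⟩ : ∃ b', b = b' + 1 := ⟨b - 1, by omega⟩
      have hn' : n = a * (m + 1) + b' := by omega
      rcases Nat.eq_zero_or_pos e with he0 | hepos
      · -- b > 0, e = 0
        subst he0
        obtain ⟨c', rfl⟩ : ∃ c', c = c' + 1 := by
          rcases Nat.eq_zero_or_pos c with h | h
          · subst h; omega
          · exact ⟨c - 1, by omega⟩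
        rw [Nat.succ_mul] at hk
        have hk' : k' = c' * (m + 1) + m := by omega
        obtain ⟨u, hu⟩ := ih k' a b' c' m (by omega) (by omega) hn' hk'
        obtain ⟨v, hv⟩ := ih (k' + 1) a b' (c' + 1) 0 (by omega) (by omega) hn'
          (by rw [Nat.succ_mul]; omega)
        obtain ⟨w, hw⟩ := cyclotomic_dvd_X_pow_mul (m + 1) (c' + 1) 0
        rw [qbinom_eq_zero (show b' < m by omega), mul_zero, sub_zero] at hu
        rw [qbinom_zero_right] at hv
        have h1 := qbinom_succ_succ n k'
        have hx : (X : Polynomial ℤ) ^ (k' + 1) - 1 = cyclotomic (m + 1) ℤ * w := by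
          rw [hk', show c' * (m + 1) + m + 1 = (c' + 1) * (m + 1) + 0 by rw [Nat.succ_mul]; omega]
          simpa using hw
        refine ⟨u + v + qbinom n (k' + 1) * w, ?_⟩
        rw [h1, qbinom_zero_right]
        linear_combination hu + hv + qbinom n (k' + 1) * hx
      · -- b > 0, e > 0
        obtain ⟨e', rfl⟩ : ∃ e', e = e' + 1 := ⟨e - 1, by omega⟩
        have hk' : k' = c * (m + 1) + e' := by omega
        obtain ⟨u, hu⟩ := ih k' a b' c e' (by omega) (by omega) hn' hk'
        obtain ⟨v, hv⟩ := ih (k' + 1) a b' c (e' + 1) (by omega) he hn' (by omega)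
        obtain ⟨w, hw⟩ := cyclotomic_dvd_X_pow_mul (m + 1) c (e' + 1)
        have h1 := qbinom_succ_succ n k'
        have h2 := qbinom_succ_succ b' e'
        have hx : (X : Polynomial ℤ) ^ (k' + 1) - X ^ (e' + 1)
            = cyclotomic (m + 1) ℤ * w := by
          rw [hk', show c * (m + 1) + e' + 1 = c * (m + 1) + (e' + 1) by omega]
          exact hw
        refine ⟨u + X ^ (e' + 1) * v + qbinom n (k' + 1) * w, ?_⟩
        rw [h1, h2]
        linear_combination hu + X ^ (e' + 1) * hv + qbinom n (k' + 1) * hx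

theorem stmt9 (d : ℕ) (hd : 2 ≤ d) (x1 y1 x2 y2 : ℕ) (hx2 : x2 < d) (hy2 : y2 < d) :
    Polynomial.cyclotomic d ℤ ∣
      qbinom (x1 * d + x2) (y1 * d + y2) - (x1.choose y1 : Polynomial ℤ) * qbinom x2 y2 :=
  qlucas d hd _ _ x1 x2 y1 y2 hx2 hy2 rfl rfl
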